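/- arXiv:1112.5272 — 7 statements merged into one kernel-verified Lean document; each statement's English description precedes it below -/
import Mathlib

section
/- Let 𝔽 be a field, N ≥ 1, and m₀, …, m_N ≥ 0, and let (A_k)_{k=1,…,N} be a based chain complex over 𝔽 (A_k ∈ Mat(m_{k−1} × m_k, 𝔽) with A_{k−1}·A_k = 0 for 2 ≤ k ≤ N). Then (A_k) admits a Barannikov normal form: there exist upper-triangular matrices P_k ∈ Mat(m_k × m_k, 𝔽) with nonzero diagonal entries (k = 0, …, N) such that every B_k := P_{k−1}⁻¹ · A_k · P_k is a partial permutation matrix. -/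
/-- A partial permutation matrix: every entry is `0` or `1`, with at most one nonzero entry
in each row and in each column. -/
def IsPartialPermMatrix {p q : ℕ} {R : Type*} [Zero R] [One R]
    (B : Matrix (Fin p) (Fin q) R) : Prop :=
  (∀ i j, B i j = 0 ∨ B i j = 1) ∧
  (∀ i j j', B i j ≠ 0 → B i j' ≠ 0 → j = j') ∧
  (∀ i i' j, B i j ≠ 0 → B i' j ≠ 0 → i = i')

/-- An upper-triangular square matrix with nonzero (hence invertible, over a field)
diagonal entries. -/
def IsUpperTriNZDiag {p : ℕ} {R : Type*} [Zero R] (P : Matrix (Fin p) (Fin p) R) : Prop :=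
  (∀ i j : Fin p, j < i → P i j = 0) ∧ (∀ i, P i i ≠ 0)

open Matrix
section Helpers
variable {𝔽 : Type*} [Field 𝔽]

lemma utd_isUnit_det {p : ℕ} {P : Matrix (Fin p) (Fin p) 𝔽} (h : IsUpperTriNZDiag P) :
    IsUnit P.det := by
  have hbt : P.BlockTriangular id := fun i j hij => h.1 i j hij
  rw [Matrix.det_of_upperTriangular hbt]
  exact isUnit_iff_ne_zero.2 (Finset.prod_ne_zero_iff.2 fun i _ => h.2 i)

lemma utd_one {p : ℕ} : IsUpperTriNZDiag (1 : Matrix (Fin p) (Fin p) 𝔽) :=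
  ⟨fun i j hij => Matrix.one_apply_ne ((ne_of_lt hij).symm), fun i => by simp⟩

lemma utd_mul {p : ℕ} {P Q : Matrix (Fin p) (Fin p) 𝔽} (hP : IsUpperTriNZDiag P)
    (hQ : IsUpperTriNZDiag Q) : IsUpperTriNZDiag (P * Q) := by
  constructor
  · intro i j hij
    rw [Matrix.mul_apply]
    apply Finset.sum_eq_zero
    intro b _
    rcases lt_or_ge b i with hb | hb
    · rw [hP.1 i b hb, zero_mul]
    · rw [hQ.1 b j (lt_of_lt_of_le hij hb), mul_zero]
  · intro i
    rw [Matrix.mul_apply]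
    rw [Finset.sum_eq_single i]
    · exact mul_ne_zero (hP.2 i) (hQ.2 i)
    · intro b _ hb
      rcases lt_or_ge b i with h | h
      · rw [hP.1 i b h, zero_mul]
      · rw [hQ.1 b i (lt_of_le_of_ne h (Ne.symm hb)), mul_zero]
    · intro h; exact absurd (Finset.mem_univ i) h

lemma inv_row_one {p : ℕ} {P : Matrix (Fin p) (Fin p) 𝔽} (hP : IsUnit P.det) (j : Fin p)
    (h : ∀ l, P j l = (1 : Matrix (Fin p) (Fin p) 𝔽) j l) :
    ∀ l, P⁻¹ j l = (1 : Matrix (Fin p) (Fin p) 𝔽) j l := by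
  intro l
  have h1 : (P * P⁻¹) j l = (1 : Matrix (Fin p) (Fin p) 𝔽) j l := by
    rw [Matrix.mul_nonsing_inv _ hP]
  rw [← h1, Matrix.mul_apply]
  rw [Finset.sum_eq_single j]
  · rw [h j, Matrix.one_apply_eq, one_mul]
  · intro b _ hb
    rw [h b, Matrix.one_apply_ne (Ne.symm hb), zero_mul]
  · intro hj; exact absurd (Finset.mem_univ j) hj

lemma mulVec_apply' {p q : ℕ} (M : Matrix (Fin p) (Fin q) 𝔽) (v : Fin q → 𝔽) (i : Fin p) :
    (M *ᵥ v) i = ∑ j, M i j * v j := rfl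

lemma key_reduce {𝔽 : Type*} [Field 𝔽] (q : ℕ) : ∀ (r : ℕ) (A : Matrix (Fin q) (Fin r) 𝔽),
    ∃ (Q : Matrix (Fin q) (Fin q) 𝔽) (R : Matrix (Fin r) (Fin r) 𝔽),
      IsUpperTriNZDiag Q ∧ IsUpperTriNZDiag R ∧
      (∀ j : Fin q, (∀ c, A j c = 0) → ∀ l, Q j l = (1 : Matrix (Fin q) (Fin q) 𝔽) j l) ∧
      IsPartialPermMatrix (Q⁻¹ * A * R) := by
  intro r
  induction r with
  | zero =>
    intro A
    refine ⟨1, 1, utd_one, utd_one, fun j _ l => rfl, ?_, ?_, ?_⟩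
    · intro i j; exact j.elim0
    · intro i j; exact j.elim0
    · intro i i' j; exact j.elim0
  | succ r IH =>
    intro A
    classical
    set A₀ : Matrix (Fin q) (Fin r) 𝔽 := Matrix.of (fun i j => A i j.castSucc) with hA₀def
    obtain ⟨Q₀, R₀, hQ₀, hR₀, hrow₀, hB⟩ := IH A₀
    have hQ₀d : IsUnit Q₀.det := utd_isUnit_det hQ₀
    set B₀ : Matrix (Fin q) (Fin r) 𝔽 := Q₀⁻¹ * A₀ * R₀ with hB₀def
    obtain ⟨hB1, hBr, hBc⟩ := hB
    set v : Fin q → 𝔽 := fun i => A i (Fin.last r) with hvdef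
    set w₀ : Fin q → 𝔽 := Q₀⁻¹ *ᵥ v with hw₀def
    set w₁ : Fin q → 𝔽 := fun i => if (∀ c, B₀ i c = 0) then w₀ i else 0 with hw₁def
    set s : Fin r → 𝔽 := fun c => -∑ i, B₀ i c * w₀ i with hsdef
    have hy : ∀ i, (B₀ *ᵥ s) i + w₀ i = w₁ i := by
      intro i
      by_cases h : ∀ c, B₀ i c = 0
      · have h2 : (B₀ *ᵥ s) i = 0 := by
          simp [Matrix.mulVec, dotProduct, h]
        rw [h2, zero_add, hw₁def]
        simp [h]
      · have h' := h
        push_neg at h'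
        obtain ⟨c₀, hc₀⟩ := h'
        have h1 : B₀ i c₀ = 1 := (hB1 i c₀).resolve_left hc₀
        have h2 : (B₀ *ᵥ s) i = s c₀ := by
          rw [Matrix.mulVec, dotProduct, Finset.sum_eq_single c₀]
          · rw [h1, one_mul]
          · intro c _ hc
            have : B₀ i c = 0 := by
              by_contra hcn; exact hc (hBr i c c₀ hcn hc₀)
            rw [this, zero_mul]
          · intro hn; exact absurd (Finset.mem_univ c₀) hn
        have h3 : s c₀ = - w₀ i := by
          rw [hsdef]
          simp only
          rw [Finset.sum_eq_single i]
          · rw [h1, one_mul]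
          · intro i' _ hi'
            have : B₀ i' c₀ = 0 := by
              by_contra hcn; exact hi' (hBc i' i c₀ hcn hc₀)
            rw [this, zero_mul]
          · intro hn; exact absurd (Finset.mem_univ i) hn
        rw [h2, h3, neg_add_cancel, hw₁def]
        simp [h]
    -- the column extension, parametrized by the scaling t of the last column
    set x : 𝔽 → Fin (r + 1) → 𝔽 := fun t => Fin.snoc (fun b' => t * (R₀ *ᵥ s) b') t with hxdef
    set R : 𝔽 → Matrix (Fin (r + 1)) (Fin (r + 1)) 𝔽 := fun t => Matrix.of fun a b =>
      Fin.lastCases (x t a) (fun b' => Fin.lastCases (0 : 𝔽) (fun a' => R₀ a' b') a) b with hRdef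
    have hRc : ∀ (t : 𝔽) (a' : Fin r) (b' : Fin r), R t a'.castSucc b'.castSucc = R₀ a' b' := by
      intro t a' b'; simp [hRdef]
    have hRlc : ∀ (t : 𝔽) (b' : Fin r), R t (Fin.last r) b'.castSucc = 0 := by
      intro t b'; simp [hRdef]
    have hRl : ∀ (t : 𝔽) (a : Fin (r + 1)), R t a (Fin.last r) = x t a := by
      intro t a; simp [hRdef]
    have hRut : ∀ t : 𝔽, t ≠ 0 → IsUpperTriNZDiag (R t) := by
      intro t ht
      constructor
      · intro a b hba
        refine Fin.lastCases ?_ (fun b' => ?_) b hba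
        · intro hba
          exact absurd (Fin.le_last a) (not_le.2 hba)
        · intro hba
          refine Fin.lastCases ?_ (fun a' => ?_) a hba
          · intro _; exact hRlc t b'
          · intro hba
            rw [hRc]
            exact hR₀.1 a' b' (by exact_mod_cast (Fin.castSucc_lt_castSucc_iff.mp hba))
      · intro a
        refine Fin.lastCases ?_ (fun a' => ?_) a
        · rw [hRl, hxdef]; simpa using ht
        · rw [hRc]; exact hR₀.2 a'
    have hARc : ∀ (t : 𝔽) (b : Fin q) (j : Fin r), (A * R t) b j.castSucc = (A₀ * R₀) b j := by
      intro t b j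
      rw [Matrix.mul_apply, Matrix.mul_apply, Fin.sum_univ_castSucc]
      rw [hRlc, mul_zero, add_zero]
      apply Finset.sum_congr rfl
      intro b' _
      rw [hRc]
      rfl
    have hARl : ∀ (t : 𝔽) (b : Fin q), (A * R t) b (Fin.last r)
        = t * ((A₀ *ᵥ (R₀ *ᵥ s)) b + v b) := by
      intro t b
      rw [Matrix.mul_apply, Fin.sum_univ_castSucc]
      simp only [hRl, hxdef, Fin.snoc_castSucc, Fin.snoc_last]
      rw [mul_add]
      congr 1
      · rw [mulVec_apply', Finset.mul_sum]
        apply Finset.sum_congr rfl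
        intro b' _
        rw [hA₀def]
        simp only [Matrix.of_apply]
        ring
      · simp only [hvdef]; ring
    have hM₁c : ∀ (t : 𝔽) (i : Fin q) (j : Fin r), (Q₀⁻¹ * A * R t) i j.castSucc = B₀ i j := by
      intro t i j
      rw [Matrix.mul_assoc, Matrix.mul_apply]
      rw [hB₀def, Matrix.mul_assoc, Matrix.mul_apply]
      apply Finset.sum_congr rfl
      intro b _
      rw [hARc]
    have hM₁l : ∀ (t : 𝔽) (i : Fin q), (Q₀⁻¹ * A * R t) i (Fin.last r) = t * w₁ i := by
      intro t i
      rw [Matrix.mul_assoc, Matrix.mul_apply]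
      have : ∀ b, Q₀⁻¹ i b * (A * R t) b (Fin.last r)
          = t * (Q₀⁻¹ i b * ((A₀ *ᵥ (R₀ *ᵥ s)) b + v b)) := by
        intro b; rw [hARl]; ring
      rw [Finset.sum_congr rfl fun b _ => this b, ← Finset.mul_sum]
      congr 1
      have hsum : ∑ b, Q₀⁻¹ i b * ((A₀ *ᵥ (R₀ *ᵥ s)) b + v b)
          = (Q₀⁻¹ *ᵥ (A₀ *ᵥ (R₀ *ᵥ s))) i + (Q₀⁻¹ *ᵥ v) i := by
        rw [mulVec_apply', mulVec_apply', ← Finset.sum_add_distrib]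
        apply Finset.sum_congr rfl
        intro b _; ring
      rw [hsum]
      have : Q₀⁻¹ *ᵥ (A₀ *ᵥ (R₀ *ᵥ s)) = B₀ *ᵥ s := by
        rw [Matrix.mulVec_mulVec, Matrix.mulVec_mulVec, hB₀def]
      rw [this, ← hw₀def]
      exact hy i
    by_cases hw : w₁ = 0
    · -- the new column reduces to zero
      refine ⟨Q₀, R 1, hQ₀, hRut 1 one_ne_zero, ?_, ?_, ?_, ?_⟩
      · intro j hj l
        exact hrow₀ j (fun c => hj c.castSucc) l
      · intro i b
        refine Fin.lastCases ?_ (fun j => ?_) b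
        · left; rw [hM₁l, hw]; simp
        · rw [hM₁c]; exact hB1 i j
      · intro i b b' hb hb'
        have hz : ∀ b'' : Fin (r+1), (Q₀⁻¹ * A * R 1) i b'' ≠ 0 →
            ∃ j : Fin r, b'' = j.castSucc ∧ B₀ i j ≠ 0 := by
          intro b'' hb''
          refine Fin.lastCases ?_ (fun j hj => ⟨j, rfl, by rwa [hM₁c] at hj⟩) b'' hb''
          · intro hcon
            rw [hM₁l, hw] at hcon; simp at hcon
        obtain ⟨j, rfl, hj⟩ := hz b hb
        obtain ⟨j', rfl, hj'⟩ := hz b' hb'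
        rw [hBr i j j' hj hj']
      · intro i i' b hb hb'
        have hz : ∀ (i'' : Fin q), (Q₀⁻¹ * A * R 1) i'' b ≠ 0 →
            ∃ j : Fin r, b = j.castSucc := by
          intro i'' hb''
          refine Fin.lastCases ?_ (fun j _ => ⟨j, rfl⟩) b hb''
          · intro hcon
            rw [hM₁l, hw] at hcon; simp at hcon
        obtain ⟨j, rfl⟩ := hz i hb
        rw [hM₁c] at hb hb'
        exact hBc i i' j hb hb'
    · -- the new column has a pivot
      have hex : ∃ i, w₁ i ≠ 0 := by
        by_contra hcon
        push_neg at hcon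
        exact hw (funext hcon)
      set S : Finset (Fin q) := Finset.univ.filter (fun i => w₁ i ≠ 0) with hSdef
      have hS : S.Nonempty := by
        obtain ⟨i₀, hi₀⟩ := hex
        exact ⟨i₀, Finset.mem_filter.2 ⟨Finset.mem_univ _, hi₀⟩⟩
      set istar : Fin q := S.max' hS with histardef
      have histar : w₁ istar ≠ 0 := (Finset.mem_filter.mp (S.max'_mem hS)).2
      have hle : ∀ i, w₁ i ≠ 0 → i ≤ istar := fun i hi =>
        S.le_max' i (Finset.mem_filter.2 ⟨Finset.mem_univ _, hi⟩)
      have hrowistar : ∀ c, B₀ istar c = 0 := by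
        by_cases h : ∀ c, B₀ istar c = 0
        · exact h
        · exfalso
          apply histar
          rw [hw₁def]
          simp only
          rw [if_neg h]
      set t : 𝔽 := (w₁ istar)⁻¹ with htdef
      have ht : t ≠ 0 := inv_ne_zero histar
      set c_ : Fin q → 𝔽 := fun i => if i = istar then 0 else t * w₁ i with hcdef
      set cE : Matrix (Fin q) (Fin q) 𝔽 :=
        Matrix.of fun i i' => if i' = istar then c_ i else 0 with hcEdef
      set G : Matrix (Fin q) (Fin q) 𝔽 := 1 + cE with hGdef
      set F : Matrix (Fin q) (Fin q) 𝔽 := 1 - cE with hFdef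
      have hcistar : c_ istar = 0 := by rw [hcdef]; simp
      have hGut : IsUpperTriNZDiag G := by
        constructor
        · intro i j hij
          rw [hGdef, Matrix.add_apply, Matrix.one_apply_ne (ne_of_lt hij).symm, zero_add,
            hcEdef, Matrix.of_apply]
          by_cases hj : j = istar
          · subst hj
            have hwi : w₁ i = 0 := by
              by_contra hcon
              exact absurd (hle i hcon) (not_le.2 hij)
            rw [if_pos rfl, hcdef]
            simp [hwi]
          · rw [if_neg hj]
        · intro i
          rw [hGdef, Matrix.add_apply, Matrix.one_apply_eq, hcEdef, Matrix.of_apply]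
          by_cases hi : i = istar
          · subst hi
            rw [if_pos rfl, hcistar]
            simp
          · rw [if_neg hi]
            simp
      have hcc : cE * cE = 0 := by
        ext i i''
        rw [Matrix.mul_apply, Matrix.zero_apply]
        apply Finset.sum_eq_zero
        intro i' _
        rw [hcEdef, Matrix.of_apply, Matrix.of_apply]
        by_cases h1 : i' = istar
        · subst h1
          by_cases h2 : i'' = istar
          · rw [if_pos h2, hcistar, mul_zero]
          · rw [if_neg h2, mul_zero]
        · rw [if_neg h1, zero_mul]
      have hGF : G * F = 1 := by
        rw [hGdef, hFdef, add_mul, mul_sub, mul_sub, hcc]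
        simp
      have hGinv : G⁻¹ = F := Matrix.inv_eq_right_inv hGF
      set Q : Matrix (Fin q) (Fin q) 𝔽 := Q₀ * G with hQdef
      have hQut : IsUpperTriNZDiag Q := utd_mul hQ₀ hGut
      have hQinv : Q⁻¹ = F * Q₀⁻¹ := by
        rw [hQdef, Matrix.mul_inv_rev, hGinv]
      set M₁ : Matrix (Fin q) (Fin (r + 1)) 𝔽 := Q₀⁻¹ * A * R t with hM₁def
      have hMeq : Q⁻¹ * A * R t = F * M₁ := by
        rw [hQinv, hM₁def, Matrix.mul_assoc, Matrix.mul_assoc, Matrix.mul_assoc]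
      have hFM : ∀ (i : Fin q) (b : Fin (r + 1)),
          (F * M₁) i b = M₁ i b - c_ i * M₁ istar b := by
        intro i b
        rw [hFdef, Matrix.sub_mul, Matrix.one_mul, Matrix.sub_apply]
        congr 1
        rw [Matrix.mul_apply, Finset.sum_eq_single istar]
        · rw [hcEdef, Matrix.of_apply, if_pos rfl]
        · intro i' _ hi'
          rw [hcEdef, Matrix.of_apply, if_neg hi', zero_mul]
        · intro hn; exact absurd (Finset.mem_univ istar) hn
      have hMc : ∀ (i : Fin q) (j : Fin r), (Q⁻¹ * A * R t) i j.castSucc = B₀ i j := by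
        intro i j
        rw [hMeq, hFM, hM₁def, hM₁c, hM₁c, hrowistar, mul_zero, sub_zero]
      have hMl : ∀ i : Fin q, (Q⁻¹ * A * R t) i (Fin.last r)
          = if i = istar then 1 else 0 := by
        intro i
        rw [hMeq, hFM, hM₁def, hM₁l, hM₁l]
        have hti : t * w₁ istar = 1 := inv_mul_cancel₀ histar
        rw [hti, mul_one]
        by_cases hi : i = istar
        · subst hi
          rw [hcistar, sub_zero, hti, if_pos rfl]
        · rw [if_neg hi, hcdef]
          simp only [if_neg hi]
          ring
      refine ⟨Q, R t, hQut, hRut t ht, ?_, ?_, ?_, ?_⟩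
      · -- rows of Q at zero rows of A are identity rows
        intro j hj l
        have hq0 : ∀ l, Q₀ j l = (1 : Matrix (Fin q) (Fin q) 𝔽) j l :=
          hrow₀ j (fun c => hj c.castSucc)
        have hq0i : ∀ l, Q₀⁻¹ j l = (1 : Matrix (Fin q) (Fin q) 𝔽) j l :=
          inv_row_one hQ₀d j hq0
        have hw0j : w₀ j = 0 := by
          rw [hw₀def, mulVec_apply', Finset.sum_eq_single j]
          · rw [hq0i j, Matrix.one_apply_eq, one_mul, hvdef]
            exact hj (Fin.last r)
          · intro b _ hb
            rw [hq0i b, Matrix.one_apply_ne (Ne.symm hb), zero_mul]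
          · intro hn; exact absurd (Finset.mem_univ j) hn
        have hw1j : w₁ j = 0 := by
          rw [hw₁def]
          simp only
          split
          · exact hw0j
          · rfl
        have hcj : c_ j = 0 := by
          rw [hcdef]
          simp only [hw1j, mul_zero]
          split <;> rfl
        rw [hQdef, Matrix.mul_apply, Finset.sum_eq_single j]
        · rw [hq0 j, Matrix.one_apply_eq, one_mul, hGdef, Matrix.add_apply, hcEdef,
            Matrix.of_apply]
          by_cases hl : l = istar
          · rw [if_pos hl, hcj, add_zero]
          · rw [if_neg hl, add_zero]
        · intro b _ hb
          rw [hq0 b, Matrix.one_apply_ne (Ne.symm hb), zero_mul]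
        · intro hn; exact absurd (Finset.mem_univ j) hn
      · -- entries are 0 or 1
        intro i b
        refine Fin.lastCases ?_ (fun j => ?_) b
        · rw [hMl]
          split
          · right; rfl
          · left; rfl
        · rw [hMc]; exact hB1 i j
      · -- at most one nonzero entry in each row
        intro i b b' hb hb'
        have hz : ∀ b'' : Fin (r+1), (Q⁻¹ * A * R t) i b'' ≠ 0 →
            b'' = Fin.last r ∨ ∃ j : Fin r, b'' = j.castSucc ∧ B₀ i j ≠ 0 := by
          intro b'' hb''
          refine Fin.lastCases (fun _ => Or.inl rfl)
            (fun j hj => Or.inr ⟨j, rfl, by rwa [hMc] at hj⟩) b'' hb''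
        rcases hz b hb with h1 | ⟨j, rfl, hj⟩
        · rcases hz b' hb' with h2 | ⟨j', rfl, hj'⟩
          · rw [h1, h2]
          · -- b = last, b' = castSucc: i = istar and B₀ istar j' ≠ 0, contradiction
            exfalso
            subst h1
            rw [hMl] at hb
            have hi : i = istar := by
              by_contra hcon
              rw [if_neg hcon] at hb
              exact hb rfl
            subst hi
            exact hj' (hrowistar j')
        · rcases hz b' hb' with h2 | ⟨j', rfl, hj'⟩
          · exfalso
            subst h2
            rw [hMl] at hb'
            have hi : i = istar := by
              by_contra hcon
              rw [if_neg hcon] at hb'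
              exact hb' rfl
            subst hi
            exact hj (hrowistar j)
          · rw [hBr i j j' hj hj']
      · -- at most one nonzero entry in each column
        intro i i' b hb hb'
        refine Fin.lastCases ?_ (fun j => ?_) b hb hb'
        · intro hb hb'
          rw [hMl] at hb hb'
          have hi : i = istar := by
            by_contra hcon
            rw [if_neg hcon] at hb
            exact hb rfl
          have hi' : i' = istar := by
            by_contra hcon
            rw [if_neg hcon] at hb'
            exact hb' rfl
          rw [hi, hi']
        · intro hb hb'
          rw [hMc] at hb hb'
          exact hBc i i' j hb hb'

noncomputable def keyQ {q r : ℕ} (A : Matrix (Fin q) (Fin r) 𝔽) : Matrix (Fin q) (Fin q) 𝔽 :=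
  (key_reduce q r A).choose

noncomputable def keyR {q r : ℕ} (A : Matrix (Fin q) (Fin r) 𝔽) : Matrix (Fin r) (Fin r) 𝔽 :=
  (key_reduce q r A).choose_spec.choose

lemma keyQR_spec {q r : ℕ} (A : Matrix (Fin q) (Fin r) 𝔽) :
    IsUpperTriNZDiag (keyQ A) ∧ IsUpperTriNZDiag (keyR A) ∧
    (∀ j : Fin q, (∀ c, A j c = 0) → ∀ l, keyQ A j l = (1 : Matrix (Fin q) (Fin q) 𝔽) j l) ∧
    IsPartialPermMatrix ((keyQ A)⁻¹ * A * keyR A) :=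
  (key_reduce q r A).choose_spec.choose_spec

lemma perm_mul_fix {p n m' : ℕ} {C : Matrix (Fin p) (Fin n) 𝔽} (hC : IsPartialPermMatrix C)
    {A' : Matrix (Fin n) (Fin m') 𝔽} (hCA : C * A' = 0) {Q : Matrix (Fin n) (Fin n) 𝔽}
    (hQ : ∀ j : Fin n, (∀ c, A' j c = 0) → ∀ l, Q j l = (1 : Matrix (Fin n) (Fin n) 𝔽) j l) :
    C * Q = C := by
  obtain ⟨hC1, hCr, _⟩ := hC
  ext i l
  rw [Matrix.mul_apply]
  by_cases h : ∀ j, C i j = 0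
  · rw [Finset.sum_eq_zero (fun j _ => by rw [h j, zero_mul]), h l]
  · push_neg at h
    obtain ⟨j₀, hj₀⟩ := h
    have hrow : ∀ j, j ≠ j₀ → C i j = 0 := fun j hj => by
      by_contra hcn; exact hj (hCr i j j₀ hcn hj₀)
    have h1 : C i j₀ = 1 := (hC1 i j₀).resolve_left hj₀
    have hA'j₀ : ∀ c, A' j₀ c = 0 := by
      intro c
      have h2 : (C * A') i c = 0 := by rw [hCA, Matrix.zero_apply]
      rw [Matrix.mul_apply, Finset.sum_eq_single j₀] at h2
      · rwa [h1, one_mul] at h2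
      · intro j _ hj; rw [hrow j hj, zero_mul]
      · intro hn; exact absurd (Finset.mem_univ j₀) hn
    rw [Finset.sum_eq_single j₀]
    · rw [hQ j₀ hA'j₀ l, h1, one_mul]
      by_cases hl : l = j₀
      · subst hl; rw [Matrix.one_apply_eq, h1]
      · rw [Matrix.one_apply_ne (Ne.symm hl), hrow l hl]
    · intro j _ hj; rw [hrow j hj, zero_mul]
    · intro hn; exact absurd (Finset.mem_univ j₀) hn

end Helpers

noncomputable def barG (𝔽 : Type*) [Field 𝔽] (m : ℕ → ℕ)
    (A : ∀ k : ℕ, Matrix (Fin (m k)) (Fin (m (k + 1))) 𝔽) :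
    ∀ k : ℕ, Matrix (Fin (m k)) (Fin (m k)) 𝔽 × Matrix (Fin (m (k + 1))) (Fin (m (k + 1))) 𝔽
  | 0 => (keyQ (A 0), keyR (A 0))
  | (k + 1) =>
    ((barG 𝔽 m A k).2 * keyQ ((barG 𝔽 m A k).2⁻¹ * A (k + 1)),
      keyR ((barG 𝔽 m A k).2⁻¹ * A (k + 1)))

lemma barG_spec (𝔽 : Type*) [Field 𝔽] (m : ℕ → ℕ)
    (A : ∀ k : ℕ, Matrix (Fin (m k)) (Fin (m (k + 1))) 𝔽) (k : ℕ) :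
    IsUpperTriNZDiag (barG 𝔽 m A k).1 ∧ IsUpperTriNZDiag (barG 𝔽 m A k).2 ∧
    IsPartialPermMatrix ((barG 𝔽 m A k).1⁻¹ * A k * (barG 𝔽 m A k).2) := by
  induction k with
  | zero =>
    obtain ⟨h1, h2, _, h4⟩ := keyQR_spec (A 0)
    exact ⟨h1, h2, h4⟩
  | succ k IHk =>
    obtain ⟨h1, h2, _, h4⟩ := keyQR_spec ((barG 𝔽 m A k).2⁻¹ * A (k + 1))
    refine ⟨utd_mul IHk.2.1 h1, h2, ?_⟩
    show IsPartialPermMatrix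
      (((barG 𝔽 m A k).2 * keyQ ((barG 𝔽 m A k).2⁻¹ * A (k + 1)))⁻¹ * A (k + 1) *
        keyR ((barG 𝔽 m A k).2⁻¹ * A (k + 1)))
    rw [Matrix.mul_inv_rev,
      Matrix.mul_assoc ((keyQ ((barG 𝔽 m A k).2⁻¹ * A (k + 1)))⁻¹) (((barG 𝔽 m A k).2)⁻¹)
        (A (k + 1))]
    exact h4


/-- existence of the Barannikov normal form.  A based chain complex over a
field `𝔽` with degrees `0, …, N` is encoded by dimensions `m (k+1)` (paper `m_k`) for the
paper degrees `k = 0, …, N`, padded by `m 0 = 0` and `m k = 0` for `k > N + 1`, together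
with matrices `A k : Mat(m k × m (k+1))` (paper `A_k`, the differential from paper degree
`k` to degree `k − 1`; the padding makes `A 0` and `A (N+1)` the zero maps) satisfying
`A k * A (k+1) = 0`.  Then there are upper-triangular matrices `P k` with nonzero diagonal
entries such that every `B k = (P k)⁻¹ * A k * P (k+1)` is a partial permutation matrix. -/
theorem barannikov_exists (𝔽 : Type*) [Field 𝔽] (N : ℕ) (hN : 1 ≤ N)
    (m : ℕ → ℕ) (hm0 : m 0 = 0) (hmN : ∀ k, N + 1 < k → m k = 0)
    (A : ∀ k : ℕ, Matrix (Fin (m k)) (Fin (m (k + 1))) 𝔽)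
    (hA : ∀ k, A k * A (k + 1) = 0) :
    ∃ P : ∀ k : ℕ, Matrix (Fin (m k)) (Fin (m k)) 𝔽,
      (∀ k, IsUpperTriNZDiag (P k)) ∧
      ∀ k, IsPartialPermMatrix ((P k)⁻¹ * A k * P (k + 1)) := by
  refine ⟨fun k => (barG 𝔽 m A k).1, fun k => (barG_spec 𝔽 m A k).1, fun k => ?_⟩
  show IsPartialPermMatrix ((barG 𝔽 m A k).1⁻¹ * A k * (barG 𝔽 m A (k + 1)).1)
  have hsucc : (barG 𝔽 m A (k + 1)).1
      = (barG 𝔽 m A k).2 * keyQ ((barG 𝔽 m A k).2⁻¹ * A (k + 1)) := rfl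
  rw [hsucc]
  set Pk := (barG 𝔽 m A k).1 with hPk
  set W := (barG 𝔽 m A k).2 with hW
  set A' := W⁻¹ * A (k + 1) with hA'
  have hWinv : W * W⁻¹ = 1 := Matrix.mul_nonsing_inv _ (utd_isUnit_det (barG_spec 𝔽 m A k).2.1)
  have hC : IsPartialPermMatrix (Pk⁻¹ * A k * W) := (barG_spec 𝔽 m A k).2.2
  have hCA : (Pk⁻¹ * A k * W) * A' = 0 := by
    rw [hA', Matrix.mul_assoc (Pk⁻¹ * A k) W (W⁻¹ * A (k + 1)),
      ← Matrix.mul_assoc W W⁻¹ (A (k + 1)), hWinv, Matrix.one_mul,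
      Matrix.mul_assoc Pk⁻¹ (A k) (A (k + 1)), hA k, Matrix.mul_zero]
  have hfix : (Pk⁻¹ * A k * W) * keyQ A' = Pk⁻¹ * A k * W :=
    perm_mul_fix hC hCA (keyQR_spec A').2.2.1
  rw [← Matrix.mul_assoc (Pk⁻¹ * A k) W (keyQ A'), hfix]
  exact hC
end

section
/- Let 𝔽 be a field, (A_k)_{k=1,…,N} a based chain complex over 𝔽, and (B_k) a Barannikov normal form of (A_k). For each k ∈ {0, …, N}, the dimension over 𝔽 of the homology at degree k, i.e. dim(ker(A_k) / im(A_{k+1})) where A_k and A_{k+1} are viewed as linear maps 𝔽^{m_k} → 𝔽^{m_{k−1}} and 𝔽^{m_{k+1}} → 𝔽^{m_k} (with the convention that A_0 and A_{N+1} are zero maps), equals the number of indices ℓ ∈ {1, …, m_k} that are free in degree k for (B_k). -/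
open Matrix

lemma ppm_det_unit {𝔽 : Type*} [Field 𝔽] {p : ℕ} (P : Matrix (Fin p) (Fin p) 𝔽)
    (h : IsUpperTriNZDiag P) : IsUnit P.det := by
  have ht : P.BlockTriangular id := fun i j hij => h.1 i j hij
  rw [Matrix.det_of_upperTriangular ht]
  exact isUnit_iff_ne_zero.mpr (Finset.prod_ne_zero_iff.mpr fun i _ => h.2 i)

lemma ppm_rank {𝔽 : Type*} [Field 𝔽] {p q : ℕ} (B : Matrix (Fin p) (Fin q) 𝔽)
    (h : IsPartialPermMatrix B) :
    B.rank = Nat.card {j : Fin q // ¬ ∀ i, B i j = 0} := by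
  classical
  have hex : ∀ j : {j : Fin q // ¬ ∀ i, B i j = 0}, ∃ i, B i (j : Fin q) ≠ 0 := by
    intro j; by_contra hc; push_neg at hc; exact j.2 hc
  choose r hr using hex
  have hinj : Function.Injective r := by
    intro j j' e
    have h2 := hr j'
    rw [← e] at h2
    exact Subtype.ext (h.2.1 (r j) _ _ (hr j) h2)
  have hcol : ∀ j : {j : Fin q // ¬ ∀ i, B i j = 0}, Bᵀ (j : Fin q) = Pi.single (r j) 1 := by
    intro j
    funext i
    rcases eq_or_ne i (r j) with rfl | hne
    · rcases h.1 (r j) j with h0 | h1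
      · exact absurd h0 (hr j)
      · simpa [Matrix.transpose_apply] using h1
    · have hz : B i (j : Fin q) = 0 := by
        by_contra hc
        exact hne (h.2.2 i (r j) _ hc (hr j))
      simp [Matrix.transpose_apply, hz, Pi.single_eq_of_ne hne]
  have hli : LinearIndependent 𝔽
      (fun j : {j : Fin q // ¬ ∀ i, B i j = 0} => Bᵀ (j : Fin q)) := by
    have h0 := (Pi.basisFun 𝔽 (Fin p)).linearIndependent.comp r hinj
    convert h0 using 1
    funext j
    rw [hcol j]
    simp [Pi.basisFun_apply]
  have hspan : Submodule.span 𝔽 (Set.range Bᵀ)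
      = Submodule.span 𝔽
        (Set.range fun j : {j : Fin q // ¬ ∀ i, B i j = 0} => Bᵀ (j : Fin q)) := by
    apply le_antisymm
    · rw [Submodule.span_le]
      rintro x ⟨j, rfl⟩
      by_cases hj : ∀ i, B i j = 0
      · have hz : Bᵀ j = 0 := by funext i; simp [Matrix.transpose_apply, hj i]
        rw [hz]; exact Submodule.zero_mem _
      · exact Submodule.subset_span ⟨⟨j, hj⟩, rfl⟩
    · exact Submodule.span_mono (by rintro x ⟨j, rfl⟩; exact ⟨j, rfl⟩)
  rw [Matrix.rank_eq_finrank_span_cols, Matrix.col_def, hspan, finrank_span_eq_card hli,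
    Nat.card_eq_fintype_card]

lemma three_count {n : ℕ} (p q : Fin n → Prop) (h : ∀ ℓ, ¬ p ℓ → q ℓ) :
    Nat.card {ℓ // p ℓ ∧ q ℓ} + (Nat.card {ℓ // ¬ p ℓ} + Nat.card {ℓ // ¬ q ℓ}) = n := by
  classical
  simp only [Nat.card_eq_fintype_card, Fintype.card_subtype]
  have hdisj : Disjoint (Finset.univ.filter fun ℓ => ¬ p ℓ)
      (Finset.univ.filter fun ℓ => ¬ q ℓ) := by
    simp only [Finset.disjoint_left, Finset.mem_filter]
    exact fun ℓ h1 h2 => h2.2 (h ℓ h1.2)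
  have hcompl : Finset.univ.filter (fun ℓ => p ℓ ∧ q ℓ)
      = Finset.univ \ ((Finset.univ.filter fun ℓ => ¬ p ℓ)
        ∪ (Finset.univ.filter fun ℓ => ¬ q ℓ)) := by
    ext ℓ
    simp only [Finset.mem_filter, Finset.mem_univ, true_and, Finset.mem_sdiff,
      Finset.mem_union, not_or]
    tauto
  have hsub : ((Finset.univ.filter fun ℓ => ¬ p ℓ) ∪ (Finset.univ.filter fun ℓ => ¬ q ℓ))
      ⊆ Finset.univ := Finset.subset_univ _
  have hle := Finset.card_le_card hsub
  rw [Finset.card_union_of_disjoint hdisj, Finset.card_univ, Fintype.card_fin] at hle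
  rw [hcompl, Finset.card_sdiff_of_subset hsub, Finset.card_union_of_disjoint hdisj,
    Finset.card_univ, Fintype.card_fin]
  omega

/-- Betti numbers count free indices.  A based chain complex over a field `𝔽`
with degrees `0, …, N` is encoded by dimensions `m (k+1)` (paper `m_k`) padded by `m 0 = 0`
and `m k = 0` for `k > N + 1`, with differentials `A k : Mat(m k × m (k+1))` (paper `A_k`;
the padding makes the paper's conventional zero maps `A_0` and `A_{N+1}` automatic).
Let `(B k)` be a Barannikov normal form of `(A k)`.  Then for every paper degree `k ≤ N`,
the dimension of the homology `ker(A_k) / im(A_{k+1})` at degree `k` equals the number of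
indices `ℓ` of degree `k` that are free for `(B k)`, i.e. whose column in `B k` and row in
`B (k+1)` vanish. -/
theorem homology_dim_eq_card_free (𝔽 : Type*) [Field 𝔽] (N : ℕ) (hN : 1 ≤ N)
    (m : ℕ → ℕ) (hm0 : m 0 = 0) (hmN : ∀ k, N + 1 < k → m k = 0)
    (A : ∀ k : ℕ, Matrix (Fin (m k)) (Fin (m (k + 1))) 𝔽)
    (hA : ∀ k, A k * A (k + 1) = 0)
    (P : ∀ k : ℕ, Matrix (Fin (m k)) (Fin (m k)) 𝔽)
    (hP : ∀ k, IsUpperTriNZDiag (P k))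
    (B : ∀ k : ℕ, Matrix (Fin (m k)) (Fin (m (k + 1))) 𝔽)
    (hB : ∀ k, B k = (P k)⁻¹ * A k * P (k + 1))
    (hBpp : ∀ k, IsPartialPermMatrix (B k))
    (k : ℕ) (hk : k ≤ N) :
    Module.finrank 𝔽
      (↥(LinearMap.ker (Matrix.mulVecLin (A k))) ⧸
        Submodule.comap (LinearMap.ker (Matrix.mulVecLin (A k))).subtype
          (LinearMap.range (Matrix.mulVecLin (A (k + 1))))) =
    Nat.card {ℓ : Fin (m (k + 1)) //
      (∀ i, B k i ℓ = 0) ∧ (∀ j, B (k + 1) ℓ j = 0)} := by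
  classical
  have hdet : ∀ j, IsUnit (P j).det := fun j => ppm_det_unit _ (hP j)
  have hdetinv : ∀ j, IsUnit (P j)⁻¹.det := fun j => Matrix.isUnit_nonsing_inv_det _ (hdet j)
  -- rank of A j equals rank of B j
  have hrk : ∀ j, (B j).rank = (A j).rank := by
    intro j
    rw [hB j, Matrix.rank_mul_eq_left_of_isUnit_det _ _ (hdet (j + 1)),
      Matrix.rank_mul_eq_right_of_isUnit_det _ _ (hdetinv j)]
  -- B k * B (k+1) = 0
  have hBB : B k * B (k + 1) = 0 := by
    rw [hB k, hB (k + 1)]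
    calc ((P k)⁻¹ * A k * P (k + 1)) * ((P (k + 1))⁻¹ * A (k + 1) * P (k + 2))
        = (P k)⁻¹ * (A k * (P (k + 1) * (P (k + 1))⁻¹) * A (k + 1)) * P (k + 2) := by
          simp only [Matrix.mul_assoc]
      _ = 0 := by
          rw [Matrix.mul_nonsing_inv _ (hdet (k + 1)), Matrix.mul_one, hA k]
          simp
  -- disjointness
  have hdisj : ∀ ℓ : Fin (m (k + 1)), ¬ (∀ i, B k i ℓ = 0) → (∀ j, B (k + 1) ℓ j = 0) := by
    intro ℓ hℓ j
    push_neg at hℓ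
    obtain ⟨i, hi⟩ := hℓ
    by_contra hj
    have h0 : (B k * B (k + 1)) i j = 0 := by rw [hBB]; rfl
    rw [Matrix.mul_apply] at h0
    rw [Finset.sum_eq_single ℓ (fun ℓ' _ hne => by
      have : B k i ℓ' = 0 := by
        by_contra hc
        exact hne ((hBpp k).2.1 i ℓ' ℓ hc hi)
      rw [this, zero_mul]) (fun hmem => absurd (Finset.mem_univ ℓ) hmem)] at h0
    exact mul_ne_zero hi hj h0
  -- homology dimension computation
  set K := LinearMap.ker (Matrix.mulVecLin (A k)) with hK
  set R2 := LinearMap.range (Matrix.mulVecLin (A (k + 1))) with hR2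
  have hle : R2 ≤ K := by
    rintro x ⟨y, rfl⟩
    simp only [hK, LinearMap.mem_ker, Matrix.mulVecLin_apply, Matrix.mulVec_mulVec, hA k]
    simp
  have h1 := Submodule.finrank_quotient_add_finrank (Submodule.comap K.subtype R2)
  have h2 : Module.finrank 𝔽 (Submodule.comap K.subtype R2) = (A (k + 1)).rank :=
    LinearEquiv.finrank_eq (Submodule.comapSubtypeEquivOfLe hle)
  have h4 : (A k).rank + Module.finrank 𝔽 K = m (k + 1) := by
    have := LinearMap.finrank_range_add_finrank_ker (Matrix.mulVecLin (A k))
    rwa [Module.finrank_fin_fun] at this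
  -- card equalities
  have hrank1 : (A k).rank = Nat.card {ℓ : Fin (m (k + 1)) // ¬ ∀ i, B k i ℓ = 0} := by
    rw [← hrk k, ppm_rank _ (hBpp k)]
  have hppT : IsPartialPermMatrix (B (k + 1))ᵀ := by
    obtain ⟨hb1, hb2, hb3⟩ := hBpp (k + 1)
    exact ⟨fun i j => hb1 j i, fun i j j' => hb3 j j' i, fun i i' j => hb2 j i i'⟩
  have hrank2 : (A (k + 1)).rank
      = Nat.card {ℓ : Fin (m (k + 1)) // ¬ ∀ j, B (k + 1) ℓ j = 0} := by
    rw [← hrk (k + 1), ← Matrix.rank_transpose, ppm_rank _ hppT]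
    simp only [Matrix.transpose_apply]
  have hcount := three_count (fun ℓ => ∀ i, B k i ℓ = 0)
    (fun ℓ => ∀ j, B (k + 1) ℓ j = 0) hdisj
  omega
end

section
/- Let 𝔽 be a field, (A_k)_{k=1,…,N} a based chain complex over 𝔽, and (B_k) a Barannikov normal form of (A_k). Then for each k ∈ {0, …, N}, the number of indices free in degree k for (B_k) equals m_k − rank(A_k) − rank(A_{k+1}) (with the convention rank(A_0) = rank(A_{N+1}) = 0). In particular this number does not depend on the choice of Barannikov normal form. -/
open Matrix in
lemma rank_ppm_cols {p q : ℕ} {R : Type*} [Field R] (B : Matrix (Fin p) (Fin q) R)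
    (h : IsPartialPermMatrix B) :
    B.rank = Nat.card {j : Fin q // ∃ i, B i j ≠ 0} := by
  classical
  set S := {j : Fin q // ∃ i, B i j ≠ 0}
  let rr : S → Fin p := fun j => j.2.choose
  have hrr : ∀ j : S, B (rr j) j.1 ≠ 0 := fun j => j.2.choose_spec
  have hrinj : Function.Injective rr := by
    intro j j' hjj'
    have := h.2.1 (rr j) j.1 j'.1 (hrr j) (by rw [hjj']; exact hrr j')
    exact Subtype.ext this
  have hcol : ∀ j : S, (Bᵀ j.1) = Pi.single (rr j) (1 : R) := by
    intro j
    funext i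
    by_cases hi : i = rr j
    · rcases h.1 i j.1 with h0 | h1
      · rw [hi] at h0; exact absurd h0 (hrr j)
      · subst hi; simp [h1]
    · have : B i j.1 = 0 := by
        by_contra hne
        exact hi (h.2.2 i (rr j) j.1 hne (hrr j))
      simp [transpose_apply, this, Pi.single_eq_of_ne hi]
  have hli : LinearIndependent R (fun j : S => Bᵀ j.1) := by
    have heq : (fun j : S => Bᵀ j.1) = (Pi.basisFun R (Fin p)) ∘ rr := by
      funext j; rw [hcol j]; simp
    rw [heq]
    exact (Pi.basisFun R (Fin p)).linearIndependent.comp rr hrinj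
  have hspan : Submodule.span R (Set.range Bᵀ) =
      Submodule.span R (Set.range fun j : S => Bᵀ j.1) := by
    apply le_antisymm
    · rw [Submodule.span_le]
      rintro _ ⟨j, rfl⟩
      by_cases hj : ∃ i, B i j ≠ 0
      · exact Submodule.subset_span ⟨⟨j, hj⟩, rfl⟩
      · push_neg at hj
        have hz : Bᵀ j = 0 := by funext i; exact hj i
        rw [hz]; exact Submodule.zero_mem _
    · exact Submodule.span_mono (by rintro _ ⟨j, rfl⟩; exact ⟨j.1, rfl⟩)
  rw [rank_eq_finrank_span_cols, show B.col = Bᵀ from rfl, hspan, finrank_span_eq_card hli,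
    Nat.card_eq_fintype_card]

open Matrix in
lemma ppm_transpose {p q : ℕ} {R : Type*} [Zero R] [One R] (B : Matrix (Fin p) (Fin q) R)
    (h : IsPartialPermMatrix B) : IsPartialPermMatrix Bᵀ :=
  ⟨fun i j => h.1 j i, fun i j j' h1 h2 => h.2.2 j j' i h1 h2,
   fun i i' j h1 h2 => h.2.1 j i i' h1 h2⟩

open Matrix in
lemma rank_ppm_rows {p q : ℕ} {R : Type*} [Field R] (B : Matrix (Fin p) (Fin q) R)
    (h : IsPartialPermMatrix B) :
    B.rank = Nat.card {i : Fin p // ∃ j, B i j ≠ 0} := by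
  rw [← Matrix.rank_transpose, rank_ppm_cols Bᵀ (ppm_transpose B h)]
  rfl

/-- rank formula for the number of free indices.  A based chain complex over a
field `𝔽` with degrees `0, …, N` is encoded by dimensions `m (k+1)` (paper `m_k`) padded by
`m 0 = 0` and `m k = 0` for `k > N + 1`, with differentials `A k : Mat(m k × m (k+1))`
(paper `A_k`; the padding makes the paper's conventional zero maps `A_0` and `A_{N+1}`
automatic, so `rank A_0 = rank A_{N+1} = 0`).  Let `(B k)` be a Barannikov normal form of
`(A k)`.  Then for every paper degree `k ≤ N`, the number of free indices in degree `k`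
equals `m_k − rank(A_k) − rank(A_{k+1})`, hence does not depend on the normal form chosen. -/
theorem card_free_eq_rank_formula (𝔽 : Type*) [Field 𝔽] (N : ℕ) (hN : 1 ≤ N)
    (m : ℕ → ℕ) (hm0 : m 0 = 0) (hmN : ∀ k, N + 1 < k → m k = 0)
    (A : ∀ k : ℕ, Matrix (Fin (m k)) (Fin (m (k + 1))) 𝔽)
    (hA : ∀ k, A k * A (k + 1) = 0)
    (P : ∀ k : ℕ, Matrix (Fin (m k)) (Fin (m k)) 𝔽)
    (hP : ∀ k, IsUpperTriNZDiag (P k))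
    (B : ∀ k : ℕ, Matrix (Fin (m k)) (Fin (m (k + 1))) 𝔽)
    (hB : ∀ k, B k = (P k)⁻¹ * A k * P (k + 1))
    (hBpp : ∀ k, IsPartialPermMatrix (B k))
    (k : ℕ) (hk : k ≤ N) :
    Nat.card {ℓ : Fin (m (k + 1)) //
      (∀ i, B k i ℓ = 0) ∧ (∀ j, B (k + 1) ℓ j = 0)} =
    m (k + 1) - (A k).rank - (A (k + 1)).rank := by
  classical
  have hPdet : ∀ j, IsUnit (P j).det := by
    intro j
    have hbt : (P j).BlockTriangular id := fun i l hl => (hP j).1 i l hl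
    rw [Matrix.det_of_upperTriangular hbt]
    exact (Finset.prod_ne_zero_iff.mpr fun i _ => (hP j).2 i).isUnit
  have hrank : ∀ j, (B j).rank = (A j).rank := by
    intro j
    rw [hB j, Matrix.rank_mul_eq_left_of_isUnit_det _ _ (hPdet (j + 1)),
      Matrix.rank_mul_eq_right_of_isUnit_det _ _ ((P j).isUnit_nonsing_inv_det (hPdet j))]
  have hBc : B k * B (k + 1) = 0 := by
    rw [hB k, hB (k + 1)]
    simp only [Matrix.mul_assoc]
    rw [Matrix.mul_nonsing_inv_cancel_left _ _ (hPdet (k + 1)), ← Matrix.mul_assoc (A k),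
      hA k, Matrix.zero_mul, Matrix.mul_zero]
  set C := B k with hCdef
  set D := B (k + 1) with hDdef
  have hdisj : ∀ ℓ : Fin (m (k + 1)), ¬((∃ i, C i ℓ ≠ 0) ∧ (∃ j, D ℓ j ≠ 0)) := by
    rintro ℓ ⟨⟨i, hi⟩, ⟨j, hj⟩⟩
    have hent : (C * D) i j = 0 := by rw [hBc]; rfl
    rw [Matrix.mul_apply] at hent
    rw [Finset.sum_eq_single ℓ (fun t _ ht => by
        by_cases hC0 : C i t = 0
        · rw [hC0, zero_mul]
        · exact absurd ((hBpp k).2.1 i t ℓ hC0 hi) ht)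
      (fun h => absurd (Finset.mem_univ ℓ) h)] at hent
    exact mul_ne_zero hi hj hent
  -- counting
  set pp : Fin (m (k + 1)) → Prop := fun ℓ => ∃ i, C i ℓ ≠ 0 with hpp
  set qq : Fin (m (k + 1)) → Prop := fun ℓ => ∃ j, D ℓ j ≠ 0 with hqq
  have hcardC : (A k).rank = (Finset.univ.filter pp).card := by
    rw [← hrank k, rank_ppm_cols _ (hBpp k), Nat.card_eq_fintype_card, Fintype.card_subtype]
  have hcardD : (A (k + 1)).rank = (Finset.univ.filter qq).card := by
    rw [← hrank (k + 1), rank_ppm_rows _ (hBpp (k + 1)), Nat.card_eq_fintype_card,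
      Fintype.card_subtype]
  have hfree : Nat.card {ℓ : Fin (m (k + 1)) //
      (∀ i, B k i ℓ = 0) ∧ (∀ j, B (k + 1) ℓ j = 0)} =
      (Finset.univ.filter fun ℓ => ¬(pp ℓ ∨ qq ℓ)).card := by
    rw [Nat.card_eq_fintype_card, Fintype.card_subtype]
    congr 1
    apply Finset.filter_congr
    intro ℓ _
    simp only [hpp, hqq, not_or, not_exists, not_not, ← hCdef, ← hDdef]
  have hsum1 : (Finset.univ.filter fun ℓ => pp ℓ ∨ qq ℓ).card +
      (Finset.univ.filter fun ℓ => ¬(pp ℓ ∨ qq ℓ)).card = m (k + 1) := by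
    rw [Finset.card_filter_add_card_filter_not]
    simp
  have hsum2 : (Finset.univ.filter fun ℓ => pp ℓ ∨ qq ℓ).card =
      (Finset.univ.filter pp).card + (Finset.univ.filter qq).card := by
    rw [Finset.filter_or, Finset.card_union_of_disjoint]
    rw [Finset.disjoint_left]
    intro ℓ h1 h2
    exact hdisj ℓ ⟨(Finset.mem_filter.mp h1).2, (Finset.mem_filter.mp h2).2⟩
  rw [hfree, hcardC, hcardD]
  omega
end

section
/- Let 𝔽 be a field of characteristic 2. Consider the based chain complex over 𝔽 with N = 2, m₀ = 1, m₁ = 3, m₂ = 1, given by A₁ = (1 −2 −1) ∈ Mat(1 × 3, 𝔽) (a row matrix) and A₂ = (0, 1, −2)ᵀ ∈ Mat(3 × 1, 𝔽) (a column matrix); one has A₁·A₂ = 0. Then for every Barannikov normal form (B₁, B₂) of this complex, the unique index ℓ ∈ {1, 2, 3} that is free in degree 1 (i.e. the ℓ-th column of B₁ is zero and the ℓ-th row of B₂ is zero) is ℓ = 3. -/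
/-- Laudenbach's complex over a field of characteristic `2`.  For the based
chain complex `A₁ = (1 −2 −1)`, `A₂ = (0 1 −2)ᵀ` (which satisfies `A₁ * A₂ = 0`) over a field
of characteristic `2`, every Barannikov normal form `(B₁, B₂)` has its unique free index in
degree `1` equal to `3` (third basis vector, index `2` of `Fin 3` in 0-based numbering). -/
theorem laudenbach_free_index_char_two (𝔽 : Type*) [Field 𝔽] [CharP 𝔽 2]
    (P₀ : Matrix (Fin 1) (Fin 1) 𝔽) (P₁ : Matrix (Fin 3) (Fin 3) 𝔽)
    (P₂ : Matrix (Fin 1) (Fin 1) 𝔽)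
    (hP₀ : IsUpperTriNZDiag P₀) (hP₁ : IsUpperTriNZDiag P₁) (hP₂ : IsUpperTriNZDiag P₂)
    (B₁ : Matrix (Fin 1) (Fin 3) 𝔽) (B₂ : Matrix (Fin 3) (Fin 1) 𝔽)
    (hB₁ : B₁ = P₀⁻¹ * !![(1 : 𝔽), -2, -1] * P₁)
    (hB₂ : B₂ = P₁⁻¹ * !![(0 : 𝔽); 1; -2] * P₂)
    (hB₁pp : IsPartialPermMatrix B₁) (hB₂pp : IsPartialPermMatrix B₂) :
    ∀ ℓ : Fin 3, ((∀ i, B₁ i ℓ = 0) ∧ (∀ j, B₂ ℓ j = 0)) ↔ ℓ = 2 := by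
  obtain ⟨htri, hdiag⟩ := hP₁
  have h10 : P₁ 1 0 = 0 := htri 1 0 (by decide)
  have h20 : P₁ 2 0 = 0 := htri 2 0 (by decide)
  have h21 : P₁ 2 1 = 0 := htri 2 1 (by decide)
  have h2 : (2 : 𝔽) = 0 := CharTwo.two_eq_zero
  have hdet1 : P₁.det ≠ 0 := by
    rw [Matrix.det_fin_three]
    simp only [h10, h20, h21, mul_zero, zero_mul, add_zero, sub_zero, zero_add]
    exact mul_ne_zero (mul_ne_zero (hdiag 0) (hdiag 1)) (hdiag 2)
  have hdet0 : P₀.det ≠ 0 := by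
    rw [Matrix.det_fin_one]; exact hP₀.2 0
  have hE₁ : P₀ * B₁ = !![(1 : 𝔽), -2, -1] * P₁ := by
    rw [hB₁, ← Matrix.mul_assoc, ← Matrix.mul_assoc,
      Matrix.mul_nonsing_inv _ (isUnit_iff_ne_zero.mpr hdet0), Matrix.one_mul]
  have hE₂ : P₁ * B₂ = !![(0 : 𝔽); 1; -2] * P₂ := by
    rw [hB₂, ← Matrix.mul_assoc, ← Matrix.mul_assoc,
      Matrix.mul_nonsing_inv _ (isUnit_iff_ne_zero.mpr hdet1), Matrix.one_mul]
  -- B₁ 0 0 ≠ 0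
  have e1 := congrFun (congrFun hE₁ 0) 0
  simp [Matrix.mul_apply, Fin.sum_univ_three, Fin.sum_univ_one, h10, h20, h2] at e1
  have hB100 : B₁ 0 0 ≠ 0 := by
    intro h
    rw [h, mul_zero] at e1
    exact hdiag 0 e1.symm
  -- B₂ 2 0 = 0 and B₂ 1 0 ≠ 0
  have e2 := congrFun (congrFun hE₂ 2) 0
  simp [Matrix.mul_apply, Fin.sum_univ_three, Fin.sum_univ_one, h20, h21, h2] at e2
  have hB220 : B₂ 2 0 = 0 := by
    rcases e2 with h | h
    · exact absurd h (hdiag 2)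
    · exact h
  have e3 := congrFun (congrFun hE₂ 1) 0
  simp [Matrix.mul_apply, Fin.sum_univ_three, Fin.sum_univ_one, h10, hB220, h2] at e3
  have hB210 : B₂ 1 0 ≠ 0 := by
    intro h
    rw [h, mul_zero] at e3
    exact hP₂.2 0 e3.symm
  have hB102 : B₁ 0 2 = 0 := by
    by_contra h
    exact absurd (hB₁pp.2.1 0 0 2 hB100 h) (by decide)
  intro ℓ
  fin_cases ℓ
  · constructor
    · rintro ⟨h, -⟩; exact absurd (h 0) hB100
    · intro h; exact absurd h (by decide)
  · constructor
    · rintro ⟨-, h⟩; exact absurd (h 0) hB210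
    · intro h; exact absurd h (by decide)
  · constructor
    · intro _; rfl
    · intro _
      refine ⟨fun i => ?_, fun j => ?_⟩
      · fin_cases i; exact hB102
      · fin_cases j; exact hB220
end

section
/- Let 𝔽 be a field of characteristic different from 2. Consider the based chain complex over 𝔽 with N = 2, m₀ = 1, m₁ = 3, m₂ = 1, given by A₁ = (1 −2 −1) ∈ Mat(1 × 3, 𝔽) (a row matrix) and A₂ = (0, 1, −2)ᵀ ∈ Mat(3 × 1, 𝔽) (a column matrix); one has A₁·A₂ = 0. Then for every Barannikov normal form (B₁, B₂) of this complex, the unique index ℓ ∈ {1, 2, 3} that is free in degree 1 (i.e. the ℓ-th column of B₁ is zero and the ℓ-th row of B₂ is zero) is ℓ = 2. -/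
/-- Laudenbach's complex over a field of characteristic different from `2`.  For the based
chain complex `A₁ = (1 −2 −1)`, `A₂ = (0 1 −2)ᵀ` (which satisfies `A₁ * A₂ = 0`) over a field
of characteristic different from `2` (i.e. `2 ≠ 0` in `𝔽`), every Barannikov normal form `(B₁, B₂)` has its unique free index in
degree `1` equal to `2` (second basis vector, index `1` of `Fin 3` in 0-based numbering). -/
theorem laudenbach_free_index_char_ne_two (𝔽 : Type*) [Field 𝔽] (hchar : (2 : 𝔽) ≠ 0)
    (P₀ : Matrix (Fin 1) (Fin 1) 𝔽) (P₁ : Matrix (Fin 3) (Fin 3) 𝔽)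
    (P₂ : Matrix (Fin 1) (Fin 1) 𝔽)
    (hP₀ : IsUpperTriNZDiag P₀) (hP₁ : IsUpperTriNZDiag P₁) (hP₂ : IsUpperTriNZDiag P₂)
    (B₁ : Matrix (Fin 1) (Fin 3) 𝔽) (B₂ : Matrix (Fin 3) (Fin 1) 𝔽)
    (hB₁ : B₁ = P₀⁻¹ * !![(1 : 𝔽), -2, -1] * P₁)
    (hB₂ : B₂ = P₁⁻¹ * !![(0 : 𝔽); 1; -2] * P₂)
    (hB₁pp : IsPartialPermMatrix B₁) (hB₂pp : IsPartialPermMatrix B₂) :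
    ∀ ℓ : Fin 3, ((∀ i, B₁ i ℓ = 0) ∧ (∀ j, B₂ ℓ j = 0)) ↔ ℓ = 1 := by
  -- nonzero determinants
  have hd0 : IsUnit P₀.det := by
    rw [Matrix.det_fin_one]
    exact (hP₀.2 0).isUnit
  have hd1 : IsUnit P₁.det := by
    have h10 : P₁ 1 0 = 0 := hP₁.1 1 0 (by decide)
    have h20 : P₁ 2 0 = 0 := hP₁.1 2 0 (by decide)
    have h21 : P₁ 2 1 = 0 := hP₁.1 2 1 (by decide)
    rw [Matrix.det_fin_three, h10, h20, h21]
    ring_nf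
    exact (mul_ne_zero (mul_ne_zero (hP₁.2 0) (hP₁.2 1)) (hP₁.2 2)).isUnit
  have e1 : P₀ * B₁ = !![(1 : 𝔽), -2, -1] * P₁ := by
    rw [hB₁, ← Matrix.mul_assoc, ← Matrix.mul_assoc,
      Matrix.mul_nonsing_inv P₀ hd0, Matrix.one_mul]
  have e2 : P₁ * B₂ = !![(0 : 𝔽); 1; -2] * P₂ := by
    rw [hB₂, ← Matrix.mul_assoc, ← Matrix.mul_assoc,
      Matrix.mul_nonsing_inv P₁ hd1, Matrix.one_mul]
  -- B₁ 0 0 ≠ 0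
  have hB100 : B₁ 0 0 ≠ 0 := by
    have := congrFun (congrFun e1 0) 0
    simp [Matrix.mul_apply, Fin.sum_univ_succ, hP₁.1 1 0 (by decide),
      hP₁.1 2 0 (by decide)] at this
    intro h
    rw [h, mul_zero] at this
    exact hP₁.2 0 this.symm
  -- B₂ 2 0 ≠ 0
  have hB220 : B₂ 2 0 ≠ 0 := by
    have := congrFun (congrFun e2 2) 0
    simp [Matrix.mul_apply, Fin.sum_univ_succ, hP₁.1 2 0 (by decide),
      hP₁.1 2 1 (by decide)] at this
    intro h
    rw [h, mul_zero] at this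
    exact mul_ne_zero hchar (hP₂.2 0) (neg_eq_zero.mp this.symm)
  have hB101 : B₁ 0 1 = 0 := by
    by_contra h
    exact absurd (hB₁pp.2.1 0 0 1 hB100 h) (by decide)
  have hB210 : B₂ 1 0 = 0 := by
    by_contra h
    exact absurd (hB₂pp.2.2 2 1 0 hB220 h) (by decide)
  intro ℓ
  constructor
  · rintro ⟨h1, h2⟩
    fin_cases ℓ
    · exact absurd (h1 0) hB100
    · rfl
    · exact absurd (h2 0) hB220
  · rintro rfl
    refine ⟨fun i => ?_, fun j => ?_⟩
    · fin_cases i; exact hB101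
    · fin_cases j; exact hB210
end

section
/- Consider the integer matrices A₁ = (1 −2 −1) ∈ Mat(1 × 3, ℤ) (a row matrix) and A₂ = (0, 1, −2)ᵀ ∈ Mat(3 × 1, ℤ) (a column matrix), which satisfy A₁·A₂ = 0. Then there do NOT exist upper-triangular integer matrices P₀ ∈ Mat(1 × 1, ℤ), P₁ ∈ Mat(3 × 3, ℤ), P₂ ∈ Mat(1 × 1, ℤ), each with all diagonal entries equal to ±1, such that both P₀⁻¹·A₁·P₁ and P₁⁻¹·A₂·P₂ are partial permutation matrices. -/
/-- An upper-triangular square matrix with all diagonal entries equal to `±1`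
(hence invertible over ℤ). -/
def IsUpperTriPMOneDiag {p : ℕ} (P : Matrix (Fin p) (Fin p) ℤ) : Prop :=
  (∀ i j : Fin p, j < i → P i j = 0) ∧ (∀ i, P i i = 1 ∨ P i i = -1)

/-- Laudenbach's complex has no Barannikov normal form over ℤ.  For the
integer based chain complex `A₁ = (1 −2 −1)`, `A₂ = (0 1 −2)ᵀ` (which satisfies
`A₁ * A₂ = 0`), there are no upper-triangular integer matrices `P₀, P₁, P₂` with diagonal
entries `±1` such that both `P₀⁻¹ * A₁ * P₁` and `P₁⁻¹ * A₂ * P₂` are partial permutation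
matrices. -/
theorem laudenbach_no_int_barannikov :
    ¬ ∃ (P₀ : Matrix (Fin 1) (Fin 1) ℤ) (P₁ : Matrix (Fin 3) (Fin 3) ℤ)
        (P₂ : Matrix (Fin 1) (Fin 1) ℤ),
      IsUpperTriPMOneDiag P₀ ∧ IsUpperTriPMOneDiag P₁ ∧ IsUpperTriPMOneDiag P₂ ∧
      IsPartialPermMatrix (P₀⁻¹ * !![(1 : ℤ), -2, -1] * P₁) ∧
      IsPartialPermMatrix (P₁⁻¹ * !![(0 : ℤ); 1; -2] * P₂) := by
  rintro ⟨P₀, P₁, P₂, -, ⟨hP₁tri, hP₁d⟩, ⟨-, hP₂d⟩, -, hC⟩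
  have h10 : P₁ 1 0 = 0 := hP₁tri 1 0 (by decide)
  have h20 : P₁ 2 0 = 0 := hP₁tri 2 0 (by decide)
  have h21 : P₁ 2 1 = 0 := hP₁tri 2 1 (by decide)
  have hdet : IsUnit P₁.det := by
    rw [Matrix.det_fin_three, h10, h20, h21]
    rcases hP₁d 0 with h0 | h0 <;> rcases hP₁d 1 with h1 | h1 <;>
      rcases hP₁d 2 with h2 | h2 <;> rw [h0, h1, h2] <;> norm_num [Int.isUnit_iff]
  set C := P₁⁻¹ * !![(0 : ℤ); 1; -2] * P₂ with hCdef
  have hE : P₁ * C = !![(0 : ℤ); 1; -2] * P₂ := by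
    rw [hCdef, ← Matrix.mul_assoc, ← Matrix.mul_assoc, Matrix.mul_nonsing_inv P₁ hdet,
      Matrix.one_mul]
  have key := congrFun (congrFun hE 2) 0
  simp only [Matrix.mul_apply, Fin.sum_univ_three, Fin.sum_univ_one, h20, h21] at key
  norm_num at key
  have hv : Matrix.vecCons (0 : ℤ) (fun i : Fin 2 => Matrix.vecCons (1 : ℤ) (fun _ : Fin 1 => (-2 : ℤ)) i) (2 : Fin 3) = -2 := rfl
  rw [hv] at key
  have hc := hC.1 2 0
  rcases hP₁d 2 with h2 | h2 <;> rcases hP₂d 0 with hp | hp <;>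
    rw [h2, hp] at key <;> rcases hc with hc | hc <;> rw [hc] at key <;> omega
end

section
/- Consider the based chain complex over ℚ with N = 1, m₀ = 2, m₁ = 3, given by the single matrix A ∈ Mat(2 × 3, ℚ) whose columns are (1, 1)ᵀ, (2, 1)ᵀ, (1, 0)ᵀ, i.e. A = [[1, 2, 1], [1, 1, 0]]. Then for every Barannikov normal form B = P₀⁻¹·A·P₁ of this complex (P₀ ∈ Mat(2 × 2, ℚ) and P₁ ∈ Mat(3 × 3, ℚ) upper triangular with nonzero diagonal entries, B a partial permutation matrix), the unique index ℓ ∈ {1, 2, 3} whose column in B is zero is ℓ = 3. -/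
/-- the counterexample to Capitanio's criterion.  For the based chain
complex over ℚ given by the single matrix `A = [[1, 2, 1], [1, 1, 0]]`, every Barannikov
normal form `B = P₀⁻¹ * A * P₁` has its unique zero column at index `3` (third basis
vector, index `2` of `Fin 3` in 0-based numbering). -/
theorem capitanio_counterexample_free_index
    (P₀ : Matrix (Fin 2) (Fin 2) ℚ) (P₁ : Matrix (Fin 3) (Fin 3) ℚ)
    (hP₀ : IsUpperTriNZDiag P₀) (hP₁ : IsUpperTriNZDiag P₁)
    (B : Matrix (Fin 2) (Fin 3) ℚ)
    (hB : B = P₀⁻¹ * !![(1 : ℚ), 2, 1; 1, 1, 0] * P₁)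
    (hBpp : IsPartialPermMatrix B) :
    ∀ ℓ : Fin 3, (∀ i, B i ℓ = 0) ↔ ℓ = 2 := by
  obtain ⟨hBv, hrow, hcol⟩ := hBpp
  obtain ⟨hU0, hD0⟩ := hP₀
  obtain ⟨hU1, hD1⟩ := hP₁
  have h10 : P₀ 1 0 = 0 := hU0 1 0 (by decide)
  have q10 : P₁ 1 0 = 0 := hU1 1 0 (by decide)
  have q20 : P₁ 2 0 = 0 := hU1 2 0 (by decide)
  have q21 : P₁ 2 1 = 0 := hU1 2 1 (by decide)
  have hdet : IsUnit P₀.det := by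
    rw [Matrix.det_fin_two, h10]
    simpa [isUnit_iff_ne_zero] using mul_ne_zero (hD0 0) (hD0 1)
  have hPB : P₀ * B = !![(1 : ℚ), 2, 1; 1, 1, 0] * P₁ := by
    rw [hB, Matrix.mul_assoc, ← Matrix.mul_assoc P₀,
      Matrix.mul_nonsing_inv P₀ hdet, Matrix.one_mul]
  have e10 := congrFun (congrFun hPB 1) 0
  have e11 := congrFun (congrFun hPB 1) 1
  have e01 := congrFun (congrFun hPB 0) 1
  simp [Matrix.mul_apply, Fin.sum_univ_succ, h10, q10, q20, q21] at e10 e11 e01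
  -- e10 : P₀ 1 1 * B 1 0 = P₁ 0 0
  have hB10 : B 1 0 ≠ 0 := by
    intro h
    rw [h, mul_zero] at e10
    exact hD1 0 e10.symm
  have hB11 : B 1 1 = 0 := by
    by_contra h
    exact absurd (hrow 1 0 1 hB10 h) (by decide)
  have hB12 : B 1 2 = 0 := by
    by_contra h
    exact absurd (hrow 1 0 2 hB10 h) (by decide)
  have hB01 : B 0 1 ≠ 0 := by
    intro h
    rw [hB11] at e11
    rw [hB11, h] at e01
    -- e11 : 0 = P₁ 0 1 + P₁ 1 1 ; e01 : 0 = P₁ 0 1 + 2 * P₁ 1 1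
    apply hD1 1
    linarith [e11, e01]
  have hB02 : B 0 2 = 0 := by
    by_contra h
    exact absurd (hrow 0 1 2 hB01 h) (by decide)
  intro ℓ
  fin_cases ℓ
  · constructor
    · intro h; exact absurd (h 1) hB10
    · intro h; exact absurd h (by decide)
  · constructor
    · intro h; exact absurd (h 0) hB01
    · intro h; exact absurd h (by decide)
  · exact ⟨fun _ => rfl, fun _ i => by fin_cases i <;> assumption⟩
end
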